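/- Let ρ be an n × n Hermitian complex matrix, let f : Fin n → ℝ, and let ρ̂ = Σ_{r ∈ range f} P_r ρ P_r be the Lüders mixture, where P_r is the diagonal projection with (i,i) entry 1 if f(i) = r and 0 otherwise. Then the increase in quantum logical entropy equals the sum of the absolute squares of the zeroed (decohered) entries: h(ρ̂) − h(ρ) = (1 − trace(ρ̂²)) − (1 − trace(ρ²)) = Σ_{(j,k) : f(j) ≠ f(k)} |ρ_{jk}|². -/

import Mathlib

/-!
Conjugating by the spectral projections `P r` and summing over `r` keeps exactly the entries
`ρ j k` with `f j = f k`, so `ρ̂` is the decohered matrix, again Hermitian. For a Hermitian `A`,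
`tr (A * A) = tr (A * Aᴴ) = ∑ |A j k|²`, so the two traces differ by the squared moduli of the
zeroed entries.
-/

namespace Matrix

variable {ι α β : Type*}

def decohere [DecidableEq β] [Zero α] (f : ι → β) (A : Matrix ι ι α) : Matrix ι ι α :=
  of fun j k => if f j = f k then A j k else 0

@[simp]
theorem decohere_apply [DecidableEq β] [Zero α] (f : ι → β) (A : Matrix ι ι α) (j k : ι) :
    decohere f A j k = if f j = f k then A j k else 0 :=
  rfl

theorem IsHermitian.decohere [DecidableEq β] [AddMonoid α] [StarAddMonoid α] {A : Matrix ι ι α}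
    (hA : A.IsHermitian) (f : ι → β) : (A.decohere f).IsHermitian := by
  ext j k
  simp only [conjTranspose_apply, decohere_apply, eq_comm (a := f k)]
  split_ifs
  · exact hA.apply j k
  · exact star_zero α

theorem of_ite_and_eq_diagonal [DecidableEq ι] [Zero α] [One α] (f : ι → β) (r : β)
    [DecidablePred (f · = r)] :
    (of fun i j => if i = j ∧ f i = r then 1 else 0 : Matrix ι ι α) =
      diagonal fun i => if f i = r then 1 else 0 := by
  ext i j
  by_cases hij : i = j <;> simp [hij, diagonal_apply_ne]

theorem sum_image_diagonal_mul_mul_diagonal [Fintype ι] [DecidableEq ι] [DecidableEq β]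
    [NonAssocSemiring α] (f : ι → β) (A : Matrix ι ι α) :
    ∑ r ∈ Finset.univ.image f, diagonal (fun i => if f i = r then 1 else 0) * A *
        diagonal (fun i => if f i = r then 1 else 0) = A.decohere f := by
  ext j k
  simp only [sum_apply, diagonal_mul, mul_diagonal, decohere_apply, ite_mul, one_mul, zero_mul,
    mul_ite, mul_one, mul_zero]
  rw [Finset.sum_eq_single_of_mem (f j) (Finset.mem_image_of_mem f (Finset.mem_univ j))]
  · simp only [if_true, eq_comm (a := f k)]
  · intro r _ hr
    simp [Ne.symm hr]

theorem trace_mul_conjTranspose_self {𝕜 : Type*} [Fintype ι] [RCLike 𝕜] (A : Matrix ι ι 𝕜) :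
    (A * Aᴴ).trace = ((∑ j, ∑ k, ‖A j k‖ ^ 2 : ℝ) : 𝕜) := by
  simp only [trace, diag_apply, mul_apply, conjTranspose_apply, RCLike.star_def, RCLike.mul_conj]
  push_cast
  rfl

theorem IsHermitian.trace_mul_self {𝕜 : Type*} [Fintype ι] [RCLike 𝕜] {A : Matrix ι ι 𝕜}
    (hA : A.IsHermitian) : (A * A).trace = ((∑ j, ∑ k, ‖A j k‖ ^ 2 : ℝ) : 𝕜) := by
  nth_rewrite 2 [← hA.eq]
  exact trace_mul_conjTranspose_self A

theorem sum_norm_sq_sub_sum_norm_sq_decohere [Fintype ι] [DecidableEq β] {E : Type*}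
    [SeminormedAddCommGroup E] (f : ι → β) (A : Matrix ι ι E) :
    ∑ j, ∑ k, ‖A j k‖ ^ 2 - ∑ j, ∑ k, ‖A.decohere f j k‖ ^ 2 =
      ∑ j, ∑ k, if f j ≠ f k then ‖A j k‖ ^ 2 else 0 := by
  simp only [← Finset.sum_sub_distrib, decohere_apply]
  refine Finset.sum_congr rfl fun j _ => Finset.sum_congr rfl fun k _ => ?_
  by_cases h : f j = f k <;> simp [h]

end Matrix

open Matrix

/-- The increase in quantum logical entropy h(ρ) = 1 − tr(ρ²) under the Lüders
mixture operation equals the sum of the absolute squares of the zeroed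
(decohered) off-diagonal entries, i.e. those ρ_{jk} with f(j) ≠ f(k). -/
theorem luders_logical_entropy_increase {n : ℕ} (ρ : Matrix (Fin n) (Fin n) ℂ)
    (hρ : ρ.IsHermitian) (f : Fin n → ℝ) :
    let P : ℝ → Matrix (Fin n) (Fin n) ℂ := fun r =>
      Matrix.of fun i j => if i = j ∧ f i = r then 1 else 0
    let ρhat : Matrix (Fin n) (Fin n) ℂ :=
      ∑ r ∈ Finset.univ.image f, P r * ρ * P r
    (1 - (ρhat * ρhat).trace) - (1 - (ρ * ρ).trace) =
      ((∑ j, ∑ k, if f j ≠ f k then ‖ρ j k‖ ^ 2 else 0 : ℝ) : ℂ) := by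
  intro P ρhat
  have hρhat : ρhat = ρ.decohere f := by
    simp only [ρhat, P, of_ite_and_eq_diagonal, sum_image_diagonal_mul_mul_diagonal]
  rw [sub_sub_sub_cancel_left, hρhat, hρ.trace_mul_self, (hρ.decohere f).trace_mul_self,
    ← RCLike.ofReal_sub]
  exact congrArg ((↑) : ℝ → ℂ) (sum_norm_sq_sub_sum_norm_sq_decohere f ρ)
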